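/- arXiv:2509.16102 — 4 statements merged into one kernel-verified Lean document; each statement's English description precedes it below -/
import Mathlib

section
/- Let p be an odd prime, n ∈ ℕ, α ∈ (F_p)^n, I a finite index set, and for each i ∈ I a subset I_i ⊆ {1,...,n} with Σ_{j ∈ I_i} α_j = 0 in F_p. Suppose there exists r ∈ F_p^* such that for every coordinate j, |r·α_j|_p ≤ min over {i ∈ I : j ∈ I_i} of ⌊(p-1)/|I_i|⌋. Then for every i ∈ I, the lifted integers satisfy Σ_{j ∈ I_i} L(r·α_j) = 0 in ℤ. -/
/-!
The centered lift is a section of `ℤ → ZMod p`, so a sum of lifts of elements with zero sum is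
divisible by `p`. The bound on the summands keeps the absolute value of that integer at most
`card • ((p - 1) / card) ≤ p - 1`, and the only multiple of `p` that small is `0`.
-/

/-- The centered lift of an element of `ZMod p` to `ℤ`. -/
def centeredLift (p : ℕ) (x : ZMod p) : ℤ :=
  if x.val ≤ (p - 1) / 2 then (x.val : ℤ) else (x.val : ℤ) - p

section CenteredLift

variable {p : ℕ} [NeZero p]

@[simp]
lemma intCast_centeredLift (x : ZMod p) : ((centeredLift p x : ℤ) : ZMod p) = x := by
  unfold centeredLift
  split_ifs <;> simp

lemma abs_centeredLift_le (x : ZMod p) : |centeredLift p x| ≤ (min x.val (p - x.val) : ℕ) := by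
  have hx : x.val < p := x.val_lt
  unfold centeredLift
  split_ifs
  · rw [abs_of_nonneg (by positivity)]
    push_cast; omega
  · rw [abs_of_nonpos (by omega)]
    omega

lemma sum_centeredLift_eq_zero {β : Type*} (s : Finset β) (f : β → ZMod p)
    (hsum : ∑ j ∈ s, f j = 0)
    (hbound : ∀ j ∈ s, min (f j).val (p - (f j).val) ≤ (p - 1) / s.card) :
    ∑ j ∈ s, centeredLift p (f j) = 0 := by
  have hdvd : (p : ℤ) ∣ ∑ j ∈ s, centeredLift p (f j) := by
    rw [← ZMod.intCast_zmod_eq_zero_iff_dvd]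
    push_cast
    simpa using hsum
  refine Int.eq_zero_of_abs_lt_dvd hdvd ?_
  have hcard : s.card * ((p - 1) / s.card) ≤ p - 1 := Nat.mul_div_le _ _
  calc |∑ j ∈ s, centeredLift p (f j)|
      ≤ ∑ j ∈ s, |centeredLift p (f j)| := Finset.abs_sum_le_sum_abs _ _
    _ ≤ ∑ _j ∈ s, (((p - 1) / s.card : ℕ) : ℤ) :=
        Finset.sum_le_sum fun j hj => (abs_centeredLift_le _).trans (by exact_mod_cast hbound j hj)
    _ = (s.card * ((p - 1) / s.card) : ℕ) := by simp
    _ < p := by have := NeZero.pos p; omega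

end CenteredLift

theorem lifting_general_general (p : ℕ) (hp : p.Prime) (n : ℕ)
    (α : Fin n → ZMod p) (ι : Type) (I : ι → Finset (Fin n))
    (hsum : ∀ i, ∑ j ∈ I i, α j = 0)
    (r : ZMod p)
    (hbound : ∀ (i : ι) (j : Fin n), j ∈ I i →
      min ((r * α j).val) (p - (r * α j).val) ≤ (p - 1) / (I i).card) :
    ∀ i, ∑ j ∈ I i, centeredLift p (r * α j) = 0 := by
  have : NeZero p := ⟨hp.ne_zero⟩
  intro i
  refine sum_centeredLift_eq_zero (I i) (fun j => r * α j) ?_ (hbound i)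
  rw [← Finset.mul_sum, hsum i, mul_zero]

theorem lifting_general (p : ℕ) (hp : p.Prime) (hodd : Odd p) (n : ℕ)
    (α : Fin n → ZMod p) (ι : Type) [Fintype ι] (I : ι → Finset (Fin n))
    (hsum : ∀ i, ∑ j ∈ I i, α j = 0)
    (r : ZMod p) (hr : r ≠ 0)
    (hbound : ∀ (i : ι) (j : Fin n), j ∈ I i →
      min ((r * α j).val) (p - (r * α j).val) ≤ (p - 1) / (I i).card) :
    ∀ i, ∑ j ∈ I i, centeredLift p (r * α j) = 0 :=
  lifting_general_general p hp n α ι I hsum r hbound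
end

section
/- Let n, k ∈ ℕ with k ≥ 1. Then there exists a prime p > k such that for every vector α ∈ (F_p)^n there exists r ∈ F_p with r ≠ 0 such that for all i, |r·α_i|_p ≤ ⌊(p-1)/k⌋. -/
/-!
Cut `ZMod p` into the `k` arcs `{x | x.val * k / p = j}`, each of length at most `(p - 1) / k`.
If `p > k ^ n`, two distinct multipliers `t ≠ t'` send every coordinate of `α` into the same arc,
and `r = t - t'` makes each `r * α i` a difference of two points of one arc.
-/

open Finset

lemma Nat.sub_le_pred_div_of_mul_div_eq {p k a b : ℕ} (hp : 0 < p) (hk : 0 < k)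
    (h : a * k / p = b * k / p) : a - b ≤ (p - 1) / k := by
  have hak : a * k < b * k + p := by
    have ha := Nat.div_add_mod (a * k) p
    have hmod := Nat.mod_lt (a * k) hp
    have hb := Nat.div_mul_le_self (b * k) p
    rw [h] at ha
    nlinarith
  rw [Nat.le_div_iff_mul_le hk, Nat.sub_mul]
  omega

namespace ZMod

variable {p : ℕ} [NeZero p]

/-- The arc of `ZMod p` containing `x`, when the circle is cut into `k` arcs. -/
def arc (k : ℕ) (x : ZMod p) : ℕ := x.val * k / p

lemma arc_lt {k : ℕ} (hk : 0 < k) (x : ZMod p) : arc k x < k :=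
  Nat.div_lt_of_lt_mul (Nat.mul_lt_mul_of_pos_right x.val_lt hk)

lemma min_val_sub_le_of_val_le {x y : ZMod p} (h : y.val ≤ x.val) :
    min (x - y).val (p - (x - y).val) ≤ x.val - y.val := by
  rw [val_sub h]
  exact min_le_left _ _

lemma min_val_sub_le_of_arc_eq {k : ℕ} (hk : 0 < k) {x y : ZMod p} (h : arc k x = arc k y) :
    min (x - y).val (p - (x - y).val) ≤ (p - 1) / k := by
  rcases le_total y.val x.val with hyx | hxy
  · exact (min_val_sub_le_of_val_le hyx).trans
      (Nat.sub_le_pred_div_of_mul_div_eq (NeZero.pos p) hk h)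
  · rw [← valMinAbs_natAbs_eq_min, ← natAbs_valMinAbs_neg, neg_sub, valMinAbs_natAbs_eq_min]
    exact (min_val_sub_le_of_val_le hxy).trans
      (Nat.sub_le_pred_div_of_mul_div_eq (NeZero.pos p) hk h.symm)

lemma exists_ne_forall_arc_mul_eq {ι : Type*} [Fintype ι] [DecidableEq ι] {k : ℕ} (hk : 0 < k)
    (hp : k ^ Fintype.card ι < p) (α : ι → ZMod p) :
    ∃ t t' : ZMod p, t ≠ t' ∧ ∀ i, arc k (t * α i) = arc k (t' * α i) := by
  have hcard : #(Fintype.piFinset fun _ : ι => range k) < #(univ : Finset (ZMod p)) := by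
    simpa [ZMod.card] using hp
  obtain ⟨t, -, t', -, hne, heq⟩ := exists_ne_map_eq_of_card_lt_of_maps_to hcard
    (f := fun t i => arc k (t * α i))
    (fun t _ => Fintype.mem_piFinset.mpr fun i => mem_range.mpr (arc_lt hk _))
  exact ⟨t, t', hne, congrFun heq⟩

end ZMod

theorem exists_prime_always_liftable (n k : ℕ) (hk : 1 ≤ k) :
    ∃ p : ℕ, p.Prime ∧ k < p ∧
      ∀ α : Fin n → ZMod p, ∃ r : ZMod p, r ≠ 0 ∧
        ∀ i, min ((r * α i).val) (p - (r * α i).val) ≤ (p - 1) / k := by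
  obtain ⟨p, hpk, hp⟩ := Nat.exists_infinite_primes (max k (k ^ n) + 1)
  have : NeZero p := ⟨hp.ne_zero⟩
  refine ⟨p, hp, by omega, fun α => ?_⟩
  obtain ⟨t, t', hne, harc⟩ :=
    ZMod.exists_ne_forall_arc_mul_eq hk (by simp only [Fintype.card_fin]; omega) α
  refine ⟨t - t', sub_ne_zero.mpr hne, fun i => ?_⟩
  rw [sub_mul]
  exact ZMod.min_val_sub_le_of_arc_eq hk (harc i)
end

section
/- Let n, k ∈ ℕ with k ≥ 1 and let p be a prime with p - 1 > k^n. Then for every vector α ∈ (F_p)^n there exist r_1, r_2 ∈ F_p^* with r_1 ≠ r_2 such that, setting r = r_1 - r_2, every coordinate satisfies |r·α_i|_p ≤ ⌊(p-1)/k⌋. -/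
/-!
Cut `[0, p)` into the `k` intervals `[jp/k, (j+1)p/k)`, and hence `(ZMod p)ⁿ` into `kⁿ` cells.
Since there are `p - 1 > kⁿ` nonzero scalars `r`, two of the vectors `r • α` share a cell. Their
difference `(r₁ - r₂) • α` then has every coordinate at circular distance less than `p / k`
from `0` in `ZMod p`, and an integer `d` with `d * k < p` is at most `(p - 1) / k`.
-/

namespace Nat

lemma natAbs_sub_lt_of_div_eq {x y p : ℕ} (hp : 0 < p) (h : x / p = y / p) :
    ((x : ℤ) - y).natAbs < p := by
  have hx := div_add_mod x p
  have hy := div_add_mod y p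
  have := mod_lt x hp
  have := mod_lt y hp
  rw [h] at hx
  generalize p * (y / p) = q at hx hy
  omega

lemma natAbs_sub_le_of_mul_div_eq {x y k p : ℕ} (hp : 0 < p) (hk : 0 < k)
    (h : x * k / p = y * k / p) : ((x : ℤ) - y).natAbs ≤ (p - 1) / k := by
  have hlt := natAbs_sub_lt_of_div_eq hp h
  push_cast at hlt
  rw [← sub_mul, Int.natAbs_mul, Int.natAbs_natCast] at hlt
  rw [le_div_iff_mul_le hk]
  omega

end Nat

namespace ZMod

variable {p : ℕ} [NeZero p]

lemma min_val_sub_le_natAbs_sub (a b : ZMod p) :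
    min (a - b).val (p - (a - b).val) ≤ ((a.val : ℤ) - b.val).natAbs := by
  rw [← valMinAbs_natAbs_eq_min]
  refine natAbs_min_of_le_div_two p _ _ ?_ (natAbs_valMinAbs_le _)
  simp only [coe_valMinAbs, Int.cast_sub, Int.cast_natCast, natCast_zmod_val]

lemma min_val_sub_le_of_mul_div_eq {k : ℕ} (hk : 0 < k) {a b : ZMod p}
    (h : a.val * k / p = b.val * k / p) :
    min (a - b).val (p - (a - b).val) ≤ (p - 1) / k :=
  (min_val_sub_le_natAbs_sub a b).trans (Nat.natAbs_sub_le_of_mul_div_eq (NeZero.pos p) hk h)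

lemma val_mul_div_lt {k : ℕ} (hk : 0 < k) (x : ZMod p) : x.val * k / p < k :=
  Nat.div_lt_of_lt_mul (Nat.mul_lt_mul_of_pos_right x.val_lt hk)

end ZMod

theorem pigeonhole_scaling_general (n k : ℕ) (hk : 1 ≤ k) (p : ℕ)
    (hpk : k ^ n < p - 1) (α : Fin n → ZMod p) :
    ∃ r₁ r₂ : ZMod p, r₁ ≠ 0 ∧ r₂ ≠ 0 ∧ r₁ ≠ r₂ ∧
      ∀ i, min (((r₁ - r₂) * α i).val) (p - ((r₁ - r₂) * α i).val) ≤ (p - 1) / k := by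
  have : NeZero p := ⟨by omega⟩
  set scalars := Finset.univ.erase (0 : ZMod p)
  set cells := Fintype.piFinset fun _ : Fin n => Finset.range k
  let cell : ZMod p → Fin n → ℕ := fun r i => (r * α i).val * k / p
  have hcell : ∀ r ∈ scalars, cell r ∈ cells :=
    fun r _ => Fintype.mem_piFinset.2 fun i => Finset.mem_range.2 (ZMod.val_mul_div_lt hk _)
  have hcard : cells.card < scalars.card := by
    simpa [cells, scalars, Finset.card_erase_of_mem, ZMod.card] using hpk
  obtain ⟨r₁, hr₁, r₂, hr₂, hne, hsame⟩ := Finset.exists_ne_map_eq_of_card_lt_of_maps_to hcard hcell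
  refine ⟨r₁, r₂, Finset.ne_of_mem_erase hr₁, Finset.ne_of_mem_erase hr₂, hne, fun i => ?_⟩
  rw [sub_mul]
  exact ZMod.min_val_sub_le_of_mul_div_eq hk (congrFun hsame i)

theorem pigeonhole_scaling (n k : ℕ) (hk : 1 ≤ k) (p : ℕ) (hp : p.Prime)
    (hpk : k ^ n < p - 1) (α : Fin n → ZMod p) :
    ∃ r₁ r₂ : ZMod p, r₁ ≠ 0 ∧ r₂ ≠ 0 ∧ r₁ ≠ r₂ ∧
      ∀ i, min (((r₁ - r₂) * α i).val) (p - ((r₁ - r₂) * α i).val) ≤ (p - 1) / k :=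
  pigeonhole_scaling_general n k hk p hpk α
end

section
/- Let p be an odd prime, n ∈ ℕ, and α ∈ (F_p)^n. Suppose τ ranges over a finite index set T and for each τ there is a subset I_τ ⊆ {1,...,n} and signs ε_{τ,j} ∈ {±1} for j ∈ I_τ with Σ_{j ∈ I_τ} ε_{τ,j}·α_j = 0 in F_p. If there exists r ∈ F_p^* such that for every τ and every j ∈ I_τ, |r·α_j|_p ≤ ⌊(p-1)/|I_τ|⌋, then the lifted integer vector L(r·α) satisfies Σ_{j ∈ I_τ} ε_{τ,j}·L(r·α_j) = 0 in ℤ for all τ. -/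
namespace centeredLift

variable {p : ℕ} [NeZero p]

@[simp]
lemma intCast_cast (x : ZMod p) : ((centeredLift p x : ℤ) : ZMod p) = x := by
  unfold centeredLift
  split <;> push_cast <;> simp [ZMod.natCast_val]

lemma abs_eq (x : ZMod p) : |centeredLift p x| = ((min x.val (p - x.val) : ℕ) : ℤ) := by
  have hv : x.val < p := ZMod.val_lt x
  unfold centeredLift
  split <;> rw [_root_.abs_eq (by positivity)] <;>
    push_cast [Nat.cast_min, Nat.cast_sub hv.le] <;> omega

lemma abs_sum_mul_le {ι : Type*} (s : Finset ι) (c : ι → ℤ) (x : ι → ZMod p) {B : ℕ}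
    (hc : ∀ j ∈ s, |c j| ≤ 1) (hx : ∀ j ∈ s, min (x j).val (p - (x j).val) ≤ B) :
    |∑ j ∈ s, c j * centeredLift p (x j)| ≤ s.card * B :=
  calc |∑ j ∈ s, c j * centeredLift p (x j)|
      ≤ ∑ j ∈ s, |c j * centeredLift p (x j)| := Finset.abs_sum_le_sum_abs _ _
    _ ≤ ∑ _j ∈ s, (B : ℤ) := by
        refine Finset.sum_le_sum fun j hj => ?_
        rw [abs_mul, abs_eq]
        have hxj : ((min (x j).val (p - (x j).val) : ℕ) : ℤ) ≤ B := by exact_mod_cast hx j hj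
        nlinarith [hc j hj, abs_nonneg (c j)]
    _ = s.card * B := by rw [Finset.sum_const, nsmul_eq_mul]

theorem sum_mul_eq_zero {ι : Type*} (s : Finset ι) (c : ι → ℤ) (x : ι → ZMod p)
    (hc : ∀ j ∈ s, |c j| ≤ 1) (hsum : ∑ j ∈ s, (c j : ZMod p) * x j = 0)
    (hx : ∀ j ∈ s, min (x j).val (p - (x j).val) ≤ (p - 1) / s.card) :
    ∑ j ∈ s, c j * centeredLift p (x j) = 0 := by
  have hdvd : (p : ℤ) ∣ ∑ j ∈ s, c j * centeredLift p (x j) := by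
    rw [← ZMod.intCast_zmod_eq_zero_iff_dvd]
    push_cast
    simpa only [intCast_cast] using hsum
  have hcard : s.card * ((p - 1) / s.card) < p := by
    have := Nat.mul_div_le (p - 1) s.card
    have := NeZero.pos p
    omega
  have hlt : |∑ j ∈ s, c j * centeredLift p (x j)| < p :=
    (abs_sum_mul_le s c x hc hx).trans_lt (by exact_mod_cast hcard)
  exact Int.eq_zero_of_abs_lt_dvd hdvd hlt

end centeredLift

theorem signed_lifting_general (p : ℕ) (hp : p.Prime) (n : ℕ)
    (α : Fin n → ZMod p) (T : Type)
    (I : T → Finset (Fin n)) (ε : T → Fin n → ℤ)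
    (hε : ∀ τ, ∀ j ∈ I τ, ε τ j = 1 ∨ ε τ j = -1)
    (hsum : ∀ τ, ∑ j ∈ I τ, (ε τ j : ZMod p) * α j = 0)
    (r : ZMod p)
    (hbound : ∀ τ, ∀ j ∈ I τ,
      min ((r * α j).val) (p - (r * α j).val) ≤ (p - 1) / (I τ).card) :
    ∀ τ, ∑ j ∈ I τ, ε τ j * centeredLift p (r * α j) = 0 := by
  have : NeZero p := ⟨hp.ne_zero⟩
  intro τ
  refine centeredLift.sum_mul_eq_zero (I τ) (ε τ) (fun j => r * α j) ?_ ?_ (hbound τ)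
  · intro j hj
    rcases hε τ j hj with h | h <;> simp [h]
  · calc ∑ j ∈ I τ, (ε τ j : ZMod p) * (r * α j)
        = r * ∑ j ∈ I τ, (ε τ j : ZMod p) * α j := by
          rw [Finset.mul_sum]; exact Finset.sum_congr rfl fun j _ => by ring
      _ = 0 := by rw [hsum τ, mul_zero]

theorem signed_lifting (p : ℕ) (hp : p.Prime) (hodd : Odd p) (n : ℕ)
    (α : Fin n → ZMod p) (T : Type) [Fintype T]
    (I : T → Finset (Fin n)) (ε : T → Fin n → ℤ)
    (hε : ∀ τ, ∀ j ∈ I τ, ε τ j = 1 ∨ ε τ j = -1)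
    (hsum : ∀ τ, ∑ j ∈ I τ, (ε τ j : ZMod p) * α j = 0)
    (r : ZMod p) (hr : r ≠ 0)
    (hbound : ∀ τ, ∀ j ∈ I τ,
      min ((r * α j).val) (p - (r * α j).val) ≤ (p - 1) / (I τ).card) :
    ∀ τ, ∑ j ∈ I τ, ε τ j * centeredLift p (r * α j) = 0 :=
  signed_lifting_general p hp n α T I ε hε hsum r hbound
end
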